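/- There exists a constant c = c(d) < ∞ such that for every common weight distribution F satisfying ∫_0^∞ (1 − F(s))^{1/d} ds < ∞, with probability 1, limsup_{n→∞} (1/n) max_{z ∈ ℤ_+^d : ‖z‖ ≤ n} T(z) ≤ c ∫_0^∞ (1 − F(s))^{1/d} ds. -/

import Mathlib

open MeasureTheory ProbabilityTheory Filter Topology

noncomputable section

/-- `p` is a directed path from the origin `0` to `z` in `ℤ₊^d`: it visits
`∑ i, z i` sites starting at the origin, each step increasing one coordinate by `1`,
and reaches `z` after `∑ i, z i` steps (the final point `z` is excluded from the path). -/
def IsDirPath {d : ℕ} (z : Fin d → ℕ) (p : ℕ → Fin d → ℕ) : Prop :=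
  p 0 = 0 ∧ p (∑ i, z i) = z ∧
    ∀ k < ∑ i, z i, ∃ j : Fin d, p (k + 1) = Function.update (p k) j (p k j + 1)

/-- The last-passage time `T(z)`: the maximal weight of a directed path from `0` to `z`,
the weight of a path being the sum of the weights of its sites (excluding `z`). -/
def lastPassage {Ω : Type} {d : ℕ} (X : (Fin d → ℕ) → Ω → ℝ) (z : Fin d → ℕ) (ω : Ω) : ℝ :=
  sSup {s | ∃ p, IsDirPath z p ∧ s = ∑ k ∈ Finset.range (∑ i, z i), X (p k) ω}

/-- The shape function `g(x) = sup_{n ≥ 1} (1/n) E T(⌊n x⌋)` (real-valued version). -/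
def shape {Ω : Type} [MeasurableSpace Ω] {d : ℕ} (X : (Fin d → ℕ) → Ω → ℝ)
    (P : Measure Ω) (x : Fin d → ℝ) : ℝ :=
  ⨆ n : ℕ+, ((n : ℕ) : ℝ)⁻¹ * ∫ ω, lastPassage X (fun i => ⌊((n : ℕ) : ℝ) * x i⌋₊) ω ∂P

/-- The weights `{X(z)}` are i.i.d. with common distribution function `F`. -/
def IID {Ω : Type} [MeasurableSpace Ω] {d : ℕ} (X : (Fin d → ℕ) → Ω → ℝ)
    (P : Measure Ω) (F : ℝ → ℝ) : Prop :=
  (∀ z, Measurable (X z)) ∧ iIndepFun X P ∧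
    ∀ z s, P {ω | X z ω ≤ s} = ENNReal.ofReal (F s)

/-!
Let `f = (1 - F)^{1/d}` (with `F` clipped at `0`), so that `P (X > t) = f(t)^d`, and fix
`A > ∫₀^∞ f`. At scale `N = 2^j` use the levels `t_l = A N / 2^l`, `1 ≤ l ≤ j - 5`. The sites of
a directed path form a chain for the product order. Call scale `j` bad if some site of `[0, N]^d`
has weight above `A N`, or some chain of `k_l ≈ 32 N f(t_l) + 2 l + 1` sites of the box has all
weights above `t_l`. Off the bad event the dyadic layer-cake bound
`x ≤ 64 A + ∑_l 2 t_l 1{x > t_l}` gives weight at most `202 A N` to every path, because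
`t f(t) ≤ ∫₀^t f` makes `∑_l t_l f(t_l) ≤ 2 A`. The box holds at most `C(N+k, k)^d` chains of length
`k`, so by independence a chain at level `t_l` has probability at most
`(C(N+k, k) f(t_l)^k)^d ≤ (16^{-l} 9 N f(t_l))^d`; comparing the dyadic sums with `∫ f` shows that
these bounds are summable over `j` and `l`. By Borel–Cantelli, almost surely `T(z) ≤ 404 A n`
whenever `‖z‖ ≤ n` and `n` is large, and letting `A ↓ ∫₀^∞ f` gives the theorem with `c = 404`.
-/

open scoped ENNReal

open Finset

namespace DirectedPercolation

lemma sum_update_add {ι M : Type*} [Fintype ι] [DecidableEq ι] [AddCommMonoid M] (f : ι → M)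
    (j : ι) (a : M) : ∑ i, Function.update f j (f j + a) i = ∑ i, f i + a := by
  rw [sum_update_of_mem (mem_univ j), ← add_sum_erase _ _ (mem_univ j), sdiff_singleton_eq_erase,
    add_right_comm]

def HasChainAbove {d : ℕ} (N k : ℕ) (t : ℝ) (Y : (Fin d → ℕ) → ℝ) : Prop :=
  ∃ w : Fin k → Fin d → ℕ, StrictMono w ∧ (∀ i a, w i a ≤ N) ∧ ∀ i, t < Y (w i)

end DirectedPercolation

namespace IsDirPath

open DirectedPercolation

variable {d : ℕ} {z : Fin d → ℕ} {p : ℕ → Fin d → ℕ}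

lemma sum_apply (hp : IsDirPath z p) {k : ℕ} (hk : k ≤ ∑ i, z i) : ∑ i, p k i = k := by
  induction k with
  | zero => simp [hp.1]
  | succ k ih =>
    obtain ⟨j, hj⟩ := hp.2.2 k (by omega)
    rw [hj, sum_update_add, ih (by omega)]

lemma apply_le (hp : IsDirPath z p) {k : ℕ} (hk : k ≤ ∑ i, z i) (i : Fin d) : p k i ≤ k :=
  (single_le_sum (fun _ _ => Nat.zero_le _) (mem_univ i)).trans (hp.sum_apply hk).le

lemma monotoneOn (hp : IsDirPath z p) : MonotoneOn p (Set.Iic (∑ i, z i)) := by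
  intro a _ b hb hab
  induction b, hab using Nat.le_induction with
  | base => rfl
  | succ b _ ih =>
    obtain ⟨j, hj⟩ := hp.2.2 b hb
    refine (ih (Nat.le_of_succ_le hb)).trans ?_
    rw [hj]
    exact le_update_self_iff.mpr (Nat.le_succ _)

lemma strictMonoOn (hp : IsDirPath z p) : StrictMonoOn p (Set.Iic (∑ i, z i)) := by
  intro a ha b hb hab
  refine (hp.monotoneOn ha hb hab.le).lt_of_ne fun h => ?_
  have := hp.sum_apply ha
  rw [h, hp.sum_apply hb] at this
  omega

variable {N k : ℕ} {t : ℝ} {Y : (Fin d → ℕ) → ℝ}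

lemma card_filter_lt_of_not_hasChainAbove (hp : IsDirPath z p) (hzN : ∑ i, z i ≤ N)
    (hY : ¬ HasChainAbove N k t Y) : #{n ∈ range (∑ i, z i) | t < Y (p n)} < k := by
  by_contra! hk
  set S := {n ∈ range (∑ i, z i) | t < Y (p n)}
  have hS (i : Fin k) := mem_filter.mp (S.orderEmbOfFin_mem rfl (Fin.castLE hk i))
  have hSz (i : Fin k) : S.orderEmbOfFin rfl (Fin.castLE hk i) ≤ ∑ i, z i :=
    (mem_range.mp (hS i).1).le
  refine hY ⟨fun i => p (S.orderEmbOfFin rfl (Fin.castLE hk i)), fun a b hab => ?_,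
    fun i a => (hp.apply_le (hSz i) a).trans ((hSz i).trans hzN), fun i => (hS i).2⟩
  exact hp.strictMonoOn (hSz a) (hSz b)
    ((S.orderEmbOfFin rfl).strictMono ((Fin.castLE_lt_castLE_iff hk).mpr hab))

lemma le_of_not_hasChainAbove_one (hp : IsDirPath z p) (hzN : ∑ i, z i ≤ N)
    (hY : ¬ HasChainAbove N 1 t Y) {n : ℕ} (hn : n < ∑ i, z i) : Y (p n) ≤ t := by
  have := hp.card_filter_lt_of_not_hasChainAbove hzN hY
  rw [Nat.lt_one_iff, card_eq_zero, filter_eq_empty_iff] at this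
  exact not_lt.mp (this (mem_range.mpr hn))

end IsDirPath

namespace DirectedPercolation

lemma le_two_mul_div_add_sum_layers {T x : ℝ} (hT : 0 ≤ T) (hx : x ≤ T) (L : ℕ) :
    x ≤ 2 * (T / 2 ^ L) + ∑ l ∈ Icc 1 L, if T / 2 ^ l < x then 2 * (T / 2 ^ l) else 0 := by
  induction L with
  | zero =>
    rw [Icc_eq_empty (by omega), sum_empty, pow_zero, div_one]
    linarith
  | succ L ih =>
    rw [sum_Icc_succ_top (by omega)]
    have hnn : 0 ≤ ∑ l ∈ Icc 1 L, if T / 2 ^ l < x then 2 * (T / 2 ^ l) else 0 :=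
      sum_nonneg fun l _ => by split_ifs <;> positivity
    have hhalf : T / 2 ^ L = 2 * (T / 2 ^ (L + 1)) := by rw [pow_succ]; field_simp
    split_ifs with h
    · linarith
    · have : 0 ≤ T / 2 ^ (L + 1) := by positivity
      linarith

lemma sum_le_of_card_filter_le {ι : Type*} (s : Finset ι) (x : ι → ℝ) {T : ℝ} (hT : 0 ≤ T)
    (hx : ∀ i ∈ s, x i ≤ T) (L : ℕ) (n : ℕ → ℝ)
    (hn : ∀ l ∈ Icc 1 L, (#{i ∈ s | T / 2 ^ l < x i} : ℝ) ≤ n l) :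
    ∑ i ∈ s, x i ≤ #s * (2 * (T / 2 ^ L)) + ∑ l ∈ Icc 1 L, n l * (2 * (T / 2 ^ l)) :=
  calc ∑ i ∈ s, x i
      ≤ ∑ i ∈ s, (2 * (T / 2 ^ L) +
          ∑ l ∈ Icc 1 L, if T / 2 ^ l < x i then 2 * (T / 2 ^ l) else 0) :=
        sum_le_sum fun i hi => le_two_mul_div_add_sum_layers hT (hx i hi) L
    _ = #s * (2 * (T / 2 ^ L)) +
          ∑ l ∈ Icc 1 L, (#{i ∈ s | T / 2 ^ l < x i} : ℝ) * (2 * (T / 2 ^ l)) := by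
        rw [sum_add_distrib, sum_const, nsmul_eq_mul, sum_comm]
        simp only [← sum_filter, sum_const, nsmul_eq_mul]
    _ ≤ _ := by
        gcongr with l hl
        exact hn l hl

lemma sum_Icc_two_mul_add_one_div_two_pow_le (L : ℕ) :
    ∑ l ∈ Icc 1 L, (2 * l + 1 : ℝ) / 2 ^ l ≤ 5 := by
  have hclosed : ∀ L : ℕ, ∑ l ∈ Icc 1 L, (2 * l + 1 : ℝ) / 2 ^ l = 5 - (2 * L + 5) / 2 ^ L := by
    intro L
    induction L with
    | zero => norm_num
    | succ L ih =>
      rw [sum_Icc_succ_top (by omega), ih]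
      push_cast
      field_simp
      ring
  rw [hclosed]
  linarith [show 0 ≤ (2 * L + 5 : ℝ) / 2 ^ L by positivity]

section Dyadic

variable {f : ℝ → ℝ} {A : ℝ}

lemma sub_mul_le_integral_of_antitone (hf : Antitone f) {a b : ℝ} (hab : a ≤ b) :
    (b - a) * f b ≤ ∫ x in a..b, f x := by
  simpa using intervalIntegral.integral_mono_on (μ := volume) hab intervalIntegrable_const
    hf.intervalIntegrable fun x hx => hf hx.2

lemma mul_le_two_mul_integral_half (hf : Antitone f) {t : ℝ} (ht : 0 ≤ t) :
    t * f t ≤ 2 * ∫ x in t / 2..t, f x := by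
  have h := sub_mul_le_integral_of_antitone hf (half_le_self ht)
  rw [sub_half] at h
  calc t * f t = 2 * (t / 2 * f t) := by ring
    _ ≤ _ := by gcongr

variable (hf : Antitone f) (hA : ∀ a b, 0 ≤ a → a ≤ b → ∫ x in a..b, f x ≤ A)
include hf hA

lemma mul_le_of_forall_integral_le {t : ℝ} (ht : 0 ≤ t) : t * f t ≤ A := by
  simpa using (sub_mul_le_integral_of_antitone hf ht).trans (hA 0 t le_rfl ht)

lemma sum_Icc_div_two_pow_mul_le {c : ℝ} (hc : 0 ≤ c) (L : ℕ) :
    ∑ l ∈ Icc 1 L, c / 2 ^ l * f (c / 2 ^ l) ≤ 2 * A := by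
  suffices h : ∑ l ∈ Icc 1 L, c / 2 ^ l * f (c / 2 ^ l) ≤ 2 * ∫ x in c / 2 ^ (L + 1)..c / 2, f x by
    have hle : c / 2 ^ (L + 1) ≤ c / 2 :=
      div_le_div_of_nonneg_left hc two_pos (le_self_pow₀ one_le_two (by omega))
    exact h.trans (by gcongr; exact hA _ _ (by positivity) hle)
  induction L with
  | zero => simp
  | succ L ih =>
    have hstep := mul_le_two_mul_integral_half hf (t := c / 2 ^ (L + 1)) (by positivity)
    rw [div_div, ← pow_succ] at hstep
    rw [sum_Icc_succ_top (by omega), ← intervalIntegral.integral_add_adjacent_intervals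
      hf.intervalIntegrable hf.intervalIntegrable, mul_add, add_comm (2 * _)]
    exact add_le_add ih hstep

lemma sum_range_mul_two_pow_mul_le {c : ℝ} (hc : 0 ≤ c) (J : ℕ) :
    ∑ j ∈ range (J + 1), c * 2 ^ j * f (c * 2 ^ j) ≤ 3 * A := by
  suffices h : ∑ j ∈ range (J + 1), c * 2 ^ j * f (c * 2 ^ j) ≤ A + 2 * ∫ x in c..c * 2 ^ J, f x by
    linarith [hA _ _ hc (le_mul_of_one_le_right hc (one_le_pow₀ (one_le_two (α := ℝ)) (n := J)))]
  induction J with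
  | zero => simpa using mul_le_of_forall_integral_le hf hA hc
  | succ J ih =>
    have hstep := mul_le_two_mul_integral_half hf (t := c * 2 ^ (J + 1)) (by positivity)
    rw [pow_succ, ← mul_assoc, mul_div_cancel_right₀ _ two_ne_zero] at hstep
    rw [sum_range_succ, ← intervalIntegral.integral_add_adjacent_intervals
      hf.intervalIntegrable hf.intervalIntegrable, pow_succ, ← mul_assoc]
    linarith

lemma sum_range_mul_two_pow_mul_pow_le (hf0 : ∀ x, 0 ≤ f x) {c : ℝ} (hc : 0 ≤ c) {d : ℕ}
    (hd : d ≠ 0) (J : ℕ) :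
    ∑ j ∈ range J, (c * 2 ^ j * f (c * 2 ^ j)) ^ d ≤ 3 * A ^ d := by
  obtain ⟨d, rfl⟩ := Nat.exists_eq_succ_of_ne_zero hd
  have hnn (j : ℕ) : 0 ≤ c * 2 ^ j * f (c * 2 ^ j) := mul_nonneg (by positivity) (hf0 _)
  have hle (j : ℕ) : c * 2 ^ j * f (c * 2 ^ j) ≤ A :=
    mul_le_of_forall_integral_le hf hA (by positivity)
  calc ∑ j ∈ range J, (c * 2 ^ j * f (c * 2 ^ j)) ^ (d + 1)
      ≤ ∑ j ∈ range J, A ^ d * (c * 2 ^ j * f (c * 2 ^ j)) := by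
        gcongr with j
        rw [pow_succ]
        exact mul_le_mul_of_nonneg_right (pow_le_pow_left₀ (hnn j) (hle j) d) (hnn j)
    _ ≤ A ^ d * (3 * A) := by
        rw [← mul_sum]
        refine mul_le_mul_of_nonneg_left ?_ (pow_nonneg ((hnn 0).trans (hle 0)) d)
        refine le_trans ?_ (sum_range_mul_two_pow_mul_le hf hA hc J)
        rw [sum_range_succ]
        exact le_add_of_nonneg_right (hnn J)
    _ = 3 * A ^ (d + 1) := by ring

end Dyadic

lemma natCard_monotone_le_choose (α : Type*) [Finite α] [LinearOrder α] (k : ℕ) :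
    Nat.card {f : Fin k → α // Monotone f} ≤ (Nat.card α + k - 1).choose k := by
  rw [← Sym.natCard_sym_eq_choose]
  refine Nat.card_le_card_of_injective (fun f => ⟨(List.ofFn f.1 : Multiset α), by simp⟩) ?_
  rintro ⟨f, hf⟩ ⟨g, hg⟩ h
  have hperm : (List.ofFn f).Perm (List.ofFn g) := Multiset.coe_eq_coe.mp (congrArg Subtype.val h)
  exact Subtype.ext (List.ofFn_injective
    (hperm.eq_of_sortedLE (List.sortedLE_ofFn_iff.mpr hf) (List.sortedLE_ofFn_iff.mpr hg)))

lemma natCard_monotone_pi_le (ι α : Type*) [Finite ι] [Finite α] [LinearOrder α] (k : ℕ) :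
    Nat.card {w : Fin k → ι → α // Monotone w} ≤
      ((Nat.card α + k - 1).choose k) ^ Nat.card ι := by
  calc Nat.card {w : Fin k → ι → α // Monotone w}
      ≤ Nat.card (ι → {f : Fin k → α // Monotone f}) :=
        Nat.card_le_card_of_injective (fun w a => ⟨fun i => w.1 i a, fun _ _ hij => w.2 hij a⟩)
          fun w w' h => Subtype.ext (funext₂ fun i a => congrArg (fun g => (g a).1 i) h)
    _ ≤ _ := by
        rw [Nat.card_fun]
        exact Nat.pow_le_pow_left (natCard_monotone_le_choose α k) _

lemma choose_le_three_mul_div_pow (m k : ℕ) : (m.choose k : ℝ) ≤ (3 * m / k) ^ k := by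
  rcases Nat.eq_zero_or_pos k with rfl | hk
  · simp
  have hk' : (k : ℝ) ≠ 0 := by positivity
  have hfact : (k : ℝ) ^ k / k.factorial ≤ 3 ^ k :=
    calc (k : ℝ) ^ k / k.factorial ≤ Real.exp k := Real.pow_div_factorial_le_exp _ k.cast_nonneg k
      _ = Real.exp 1 ^ k := (Real.exp_one_pow k).symm
      _ ≤ 3 ^ k := by gcongr; exact Real.exp_one_lt_d9.le.trans (by norm_num)
  calc (m.choose k : ℝ) ≤ (m : ℝ) ^ k / k.factorial := Nat.choose_le_pow_div k m
    _ = (m / k : ℝ) ^ k * ((k : ℝ) ^ k / k.factorial) := by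
        rw [div_pow, mul_div_assoc', div_mul_cancel₀ _ (pow_ne_zero k hk')]
    _ ≤ (m / k : ℝ) ^ k * 3 ^ k := by gcongr
    _ = (3 * m / k) ^ k := by rw [← mul_pow]; ring

lemma choose_add_mul_pow_le {N k l : ℕ} {c : ℝ} (hc0 : 0 ≤ c) (hc : c ≤ 1 / 32)
    (hkc : 32 * N * c ≤ k) (hkl : 2 * l + 1 ≤ k) (hkN : k ≤ 2 * N) :
    ((N + k).choose k : ℝ) * c ^ k ≤ (1 / 16) ^ l * (9 * N * c) := by
  have hk : (0 : ℝ) < k := by exact_mod_cast (show 0 < k by omega)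
  have hkN' : (k : ℝ) ≤ 2 * N := by exact_mod_cast hkN
  set ρ := 3 * ((N : ℝ) + k) * c / k
  have hρ0 : 0 ≤ ρ := by positivity
  have hρ4 : ρ ≤ 1 / 4 := by
    rw [div_le_iff₀ hk]
    nlinarith
  have hρN : ρ ≤ 9 * N * c := by
    rw [div_le_iff₀ hk]
    nlinarith [mul_nonneg hc0 (sub_nonneg.mpr hkN'), mul_nonneg (mul_nonneg hc0 (Nat.cast_nonneg N))
      (sub_nonneg.mpr (show (1 : ℝ) ≤ k by exact_mod_cast (show 1 ≤ k by omega)))]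
  calc ((N + k).choose k : ℝ) * c ^ k ≤ ρ ^ k := by
        rw [show ρ ^ k = (3 * ((N + k : ℕ) : ℝ) / k) ^ k * c ^ k by push_cast; rw [← mul_pow]; ring]
        gcongr
        exact choose_le_three_mul_div_pow _ _
    _ = ρ ^ (k - 1) * ρ := by rw [← pow_succ, Nat.sub_add_cancel (by omega)]
    _ ≤ (1 / 4) ^ (2 * l) * (9 * N * c) := by
        gcongr
        exact (pow_le_pow_left₀ hρ0 hρ4 _).trans
          (pow_le_pow_of_le_one (by norm_num) (by norm_num) (by omega))
    _ = (1 / 16) ^ l * (9 * N * c) := by rw [pow_mul]; norm_num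

section ChainProbability

variable {Ω : Type*} [MeasurableSpace Ω] {P : Measure Ω}

lemma measure_iUnion_iInter_lt_le {ι κ : Type*} [Finite κ] {X : ι → Ω → ℝ}
    (hX : iIndepFun X P) {t : ℝ} {q : ℝ≥0∞} (hq : ∀ v, P {ω | t < X v ω} = q) {k : ℕ}
    (w : κ → Fin k → ι) (hw : ∀ c, Function.Injective (w c)) :
    P (⋃ c, ⋂ i, {ω | t < X (w c i) ω}) ≤ Nat.card κ * q ^ k := by
  have := Fintype.ofFinite κ
  calc P (⋃ c, ⋂ i, {ω | t < X (w c i) ω})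
      ≤ ∑ c, P (⋂ i, {ω | t < X (w c i) ω}) := measure_iUnion_fintype_le _ _
    _ = ∑ _ : κ, q ^ k := by
        refine sum_congr rfl fun c _ => ?_
        rw [(hX.precomp (hw c)).meas_iInter (s := fun i => {ω | t < X (w c i) ω})
          fun i => ⟨Set.Ioi t, measurableSet_Ioi, rfl⟩]
        simp [hq]
    _ = Nat.card κ * q ^ k := by
        rw [sum_const, nsmul_eq_mul, card_univ, Nat.card_eq_fintype_card]

lemma measure_hasChainAbove_le {d : ℕ} {X : (Fin d → ℕ) → Ω → ℝ} (hX : iIndepFun X P)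
    {t : ℝ} {q : ℝ≥0∞} (hq : ∀ v, P {ω | t < X v ω} = q) (N k : ℕ) :
    P {ω | HasChainAbove N k t (X · ω)} ≤ ((N + k).choose k) ^ d * q ^ k := by
  let κ := {w : Fin k → Fin d → Fin (N + 1) // StrictMono w}
  have hsub : {ω | HasChainAbove N k t (X · ω)} ⊆
      ⋃ c : κ, ⋂ i, {ω | t < X (fun a => (c.1 i a : ℕ)) ω} := by
    rintro ω ⟨w, hw, hN, ht⟩
    exact Set.mem_iUnion.mpr ⟨⟨fun i a => ⟨w i a, Nat.lt_succ_of_le (hN i a)⟩,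
      fun i j hij => hw hij⟩, Set.mem_iInter.mpr ht⟩
  have hcard : Nat.card κ ≤ ((N + k).choose k) ^ d := by
    calc Nat.card κ ≤ Nat.card {w : Fin k → Fin d → Fin (N + 1) // Monotone w} :=
          Nat.card_le_card_of_injective (fun c => ⟨c.1, c.2.monotone⟩)
            fun _ _ h => Subtype.ext (congrArg (·.1) h :)
      _ ≤ _ := by
          simpa using natCard_monotone_pi_le (Fin d) (Fin (N + 1)) k
  calc P {ω | HasChainAbove N k t (X · ω)}
      ≤ Nat.card κ * q ^ k :=
        (measure_mono hsub).trans (measure_iUnion_iInter_lt_le hX hq _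
          fun c => StrictMono.injective (f := fun i a => (c.1 i a : ℕ)) fun _ _ hij => c.2 hij)
    _ ≤ _ := by gcongr; exact_mod_cast hcard

end ChainProbability

/-- `1 - F t` with `F` clipped below at `0`: the identity `P {Y ≤ t} = ENNReal.ofReal (F t)`
determines only `max (F t) 0`. -/
def tail (F : ℝ → ℝ) (t : ℝ) : ℝ := 1 - max (F t) 0

def rootTail (F : ℝ → ℝ) (d : ℕ) (t : ℝ) : ℝ := tail F t ^ ((1 : ℝ) / d)

lemma tail_le_one_sub (F : ℝ → ℝ) (t : ℝ) : tail F t ≤ 1 - F t :=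
  sub_le_sub_left (le_max_left _ _) 1

section Tail

variable {Ω : Type*} [MeasurableSpace Ω] {P : Measure Ω} [IsProbabilityMeasure P] {Y : Ω → ℝ}
  {F : ℝ → ℝ} (hF : ∀ s, P {ω | Y ω ≤ s} = ENNReal.ofReal (F s))
include hF

lemma le_one_of_measure_le_eq (s : ℝ) : F s ≤ 1 :=
  ENNReal.ofReal_le_one.mp (hF s ▸ prob_le_one)

lemma tail_nonneg (t : ℝ) : 0 ≤ tail F t :=
  sub_nonneg.mpr (max_le (le_one_of_measure_le_eq hF t) zero_le_one)

omit [IsProbabilityMeasure P] in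
lemma tail_antitone : Antitone (tail F) := fun t t' htt' => by
  have h : ENNReal.ofReal (F t) ≤ ENNReal.ofReal (F t') := by
    rw [← hF, ← hF]
    exact measure_mono fun ω hω => le_trans hω htt'
  have := ENNReal.toReal_mono ENNReal.ofReal_ne_top h
  rw [ENNReal.toReal_ofReal', ENNReal.toReal_ofReal'] at this
  exact sub_le_sub_left this 1

lemma measure_lt_eq_ofReal_tail (hY : Measurable Y) (t : ℝ) :
    P {ω | t < Y ω} = ENNReal.ofReal (tail F t) := by
  have hcompl : {ω | t < Y ω} = {ω | Y ω ≤ t}ᶜ := by ext; simp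
  rw [hcompl, prob_compl_eq_one_sub (measurableSet_le hY measurable_const), hF, tail,
    ENNReal.ofReal_sub _ (le_max_right _ _), ENNReal.ofReal_one, ENNReal.ofReal_max,
    ENNReal.ofReal_zero, max_eq_left zero_le]

lemma rootTail_nonneg (d : ℕ) (t : ℝ) : 0 ≤ rootTail F d t :=
  Real.rpow_nonneg (tail_nonneg hF t) _

lemma rootTail_antitone (d : ℕ) : Antitone (rootTail F d) := fun _ _ htt' =>
  Real.rpow_le_rpow (tail_nonneg hF _) (tail_antitone hF htt') (by positivity)

lemma rootTail_pow {d : ℕ} (hd : d ≠ 0) (t : ℝ) : rootTail F d t ^ d = tail F t := by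
  rw [rootTail, one_div, Real.rpow_inv_natCast_pow (tail_nonneg hF t) hd]

lemma intervalIntegral_rootTail_le {d : ℕ}
    (hint : IntegrableOn (fun s => (1 - F s) ^ ((1 : ℝ) / d)) (Set.Ici 0) volume)
    {a b : ℝ} (ha : 0 ≤ a) (hab : a ≤ b) :
    ∫ x in a..b, rootTail F d x ≤ ∫ s in Set.Ici (0 : ℝ), (1 - F s) ^ ((1 : ℝ) / d) := by
  have hsub : Set.Ioc a b ⊆ Set.Ici 0 := fun x hx => ha.trans hx.1.le
  calc ∫ x in a..b, rootTail F d x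
      ≤ ∫ x in a..b, (1 - F x) ^ ((1 : ℝ) / d) :=
        intervalIntegral.integral_mono_on hab (rootTail_antitone hF d).intervalIntegrable
          ((intervalIntegrable_iff_integrableOn_Ioc_of_le hab).mpr (hint.mono_set hsub))
          fun x _ => Real.rpow_le_rpow (tail_nonneg hF x) (tail_le_one_sub F x) (by positivity)
    _ = ∫ x in Set.Ioc a b, (1 - F x) ^ ((1 : ℝ) / d) := intervalIntegral.integral_of_le hab
    _ ≤ _ := setIntegral_mono_set hint
        ((ae_restrict_mem measurableSet_Ici).mono fun x _ =>
          Real.rpow_nonneg (sub_nonneg.mpr (le_one_of_measure_le_eq hF x)) _)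
        hsub.eventuallyLE

end Tail

def level (A : ℝ) (j l : ℕ) : ℝ := A * 2 ^ j / 2 ^ l

/-- The extra `2 * l + 1` sites make the probabilities of long chains summable over the levels. -/
def chainLength (f : ℝ → ℝ) (A : ℝ) (j l : ℕ) : ℕ :=
  ⌈32 * 2 ^ j * f (level A j l)⌉₊ + 2 * l + 1

def BadAt {d : ℕ} (f : ℝ → ℝ) (A : ℝ) (j : ℕ) (Y : (Fin d → ℕ) → ℝ) : Prop :=
  HasChainAbove (2 ^ j) 1 (A * 2 ^ j) Y ∨
    ∃ l ∈ Icc 1 (j - 5), HasChainAbove (2 ^ j) (chainLength f A j l) (level A j l) Y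

section Deterministic

variable {f : ℝ → ℝ} {A : ℝ} (hf0 : ∀ x, 0 ≤ f x)
include hf0

lemma card_filter_level_lt_le {d j l : ℕ} {Y : (Fin d → ℕ) → ℝ} {z : Fin d → ℕ}
    {p : ℕ → Fin d → ℕ} (hp : IsDirPath z p) (hz : ∑ i, z i ≤ 2 ^ j)
    (hY : ¬ HasChainAbove (2 ^ j) (chainLength f A j l) (level A j l) Y) :
    (#{k ∈ range (∑ i, z i) | level A j l < Y (p k)} : ℝ) ≤
      32 * 2 ^ j * f (level A j l) + 2 * l + 1 := by
  have hlt := hp.card_filter_lt_of_not_hasChainAbove hz hY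
  have hceil := Nat.ceil_lt_add_one
    (show 0 ≤ 32 * 2 ^ j * f (level A j l) from mul_nonneg (by positivity) (hf0 _))
  have hle : #{k ∈ range (∑ i, z i) | level A j l < Y (p k)} ≤
      ⌈32 * 2 ^ j * f (level A j l)⌉₊ + 2 * l := by
    rw [chainLength] at hlt
    omega
  have : (#{k ∈ range (∑ i, z i) | level A j l < Y (p k)} : ℝ) ≤
      ⌈32 * 2 ^ j * f (level A j l)⌉₊ + 2 * l := by exact_mod_cast hle
  linarith

variable (hf : Antitone f) (hA : ∀ a b, 0 ≤ a → a ≤ b → ∫ x in a..b, f x ≤ A)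
include hf hA

lemma sum_le_of_not_badAt {d j : ℕ} {Y : (Fin d → ℕ) → ℝ} (hj : 5 ≤ j) (hY : ¬ BadAt f A j Y)
    {z : Fin d → ℕ} {p : ℕ → Fin d → ℕ} (hp : IsDirPath z p) (hz : ∑ i, z i ≤ 2 ^ j) :
    ∑ k ∈ range (∑ i, z i), Y (p k) ≤ 202 * A * 2 ^ j := by
  have hA0 : 0 ≤ A := by simpa using hA 0 0 le_rfl le_rfl
  simp only [BadAt, not_or, not_exists, not_and] at hY
  obtain ⟨hcap, hlev⟩ := hY
  set T := A * 2 ^ j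
  have htop : 2 * (T / 2 ^ (j - 5)) = 64 * A := by
    rw [show T = A * 2 ^ 5 * 2 ^ (j - 5) by rw [mul_assoc, ← pow_add, Nat.add_sub_cancel' hj]]
    field_simp
    ring
  have hsplit : ∑ l ∈ Icc 1 (j - 5), (32 * 2 ^ j * f (level A j l) + 2 * l + 1) * (2 * (T / 2 ^ l))
      = 64 * 2 ^ j * ∑ l ∈ Icc 1 (j - 5), T / 2 ^ l * f (T / 2 ^ l) +
        2 * T * ∑ l ∈ Icc 1 (j - 5), (2 * l + 1 : ℝ) / 2 ^ l := by
    rw [mul_sum, mul_sum, ← sum_add_distrib]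
    refine sum_congr rfl fun l _ => ?_
    rw [level]
    ring
  calc ∑ k ∈ range (∑ i, z i), Y (p k)
      ≤ #(range (∑ i, z i)) * (2 * (T / 2 ^ (j - 5))) +
          ∑ l ∈ Icc 1 (j - 5), (32 * 2 ^ j * f (level A j l) + 2 * l + 1) * (2 * (T / 2 ^ l)) :=
        sum_le_of_card_filter_le _ _ (by positivity)
          (fun k hk => hp.le_of_not_hasChainAbove_one hz hcap (mem_range.mp hk)) _ _
          fun l hl => card_filter_level_lt_le hf0 hp hz (hlev l hl)
    _ ≤ 2 ^ j * (64 * A) + (64 * 2 ^ j * (2 * A) + 2 * T * 5) := by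
        rw [htop, hsplit, card_range]
        gcongr
        · exact_mod_cast hz
        · exact sum_Icc_div_two_pow_mul_le hf hA (by positivity) _
        · exact sum_Icc_two_mul_add_one_div_two_pow_le _
    _ = 202 * A * 2 ^ j := by ring

end Deterministic

lemma tsum_ofReal_le_of_sum_range_le {g : ℕ → ℝ} (hg : ∀ j, 0 ≤ g j) {B : ℝ}
    (h : ∀ n, ∑ j ∈ range n, g j ≤ B) : ∑' j, ENNReal.ofReal (g j) ≤ ENNReal.ofReal B :=
  ENNReal.tsum_le_of_sum_range_le fun n => by
    rw [← ENNReal.ofReal_sum_of_nonneg fun j _ => hg j]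
    exact ENNReal.ofReal_le_ofReal (h n)

lemma two_pow_mul_le_of_mem_Icc {j l : ℕ} (hl : l ∈ Icc 1 (j - 5)) : 2 ^ l * 32 ≤ 2 ^ j := by
  rw [show 2 ^ l * 32 = 2 ^ (l + 5) by ring]
  exact Nat.pow_le_pow_right two_pos (by grind)

section Levels

variable {f : ℝ → ℝ} {A : ℝ} (hf : Antitone f)
  (hA : ∀ a b, 0 ≤ a → a ≤ b → ∫ x in a..b, f x ≤ A) (hA0 : 0 < A)
include hf hA hA0

lemma apply_level_le {j l : ℕ} (hl : l ∈ Icc 1 (j - 5)) : f (level A j l) ≤ 1 / 32 := by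
  have h2l : (2 : ℝ) ^ l * 32 ≤ 2 ^ j := by exact_mod_cast two_pow_mul_le_of_mem_Icc hl
  have ht : 32 * A ≤ level A j l := by
    rw [level, le_div_iff₀ (by positivity)]
    nlinarith
  have := mul_le_of_forall_integral_le hf hA (hA0.le.trans (by linarith) : 0 ≤ level A j l)
  nlinarith

lemma chainLength_le {j l : ℕ} (hl : l ∈ Icc 1 (j - 5)) : chainLength f A j l ≤ 2 * 2 ^ j := by
  have hceil : ⌈32 * 2 ^ j * f (level A j l)⌉₊ ≤ 2 ^ j := Nat.ceil_le.mpr (by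
    push_cast
    nlinarith [apply_level_le hf hA hA0 hl, pow_pos (two_pos (α := ℝ)) j])
  have := two_pow_mul_le_of_mem_Icc hl
  have := Nat.lt_two_pow_self (n := l)
  rw [chainLength]
  omega

variable (hf0 : ∀ x, 0 ≤ f x)
include hf0

lemma tsum_ofReal_cap_le {d : ℕ} (hd : d ≠ 0) :
    ∑' j : ℕ, ENNReal.ofReal ((2 * 2 ^ j * f (A * 2 ^ j)) ^ d) ≤ ENNReal.ofReal (3 * 2 ^ d) := by
  refine tsum_ofReal_le_of_sum_range_le (fun j => pow_nonneg (mul_nonneg (by positivity)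
    (hf0 _)) d) fun n => ?_
  have h := sum_range_mul_two_pow_mul_pow_le hf hA hf0 hA0.le hd n
  calc ∑ j ∈ range n, (2 * 2 ^ j * f (A * 2 ^ j)) ^ d
      = (2 / A) ^ d * ∑ j ∈ range n, (A * 2 ^ j * f (A * 2 ^ j)) ^ d := by
        rw [mul_sum]
        refine sum_congr rfl fun j _ => ?_
        rw [← mul_pow]
        field_simp
    _ ≤ (2 / A) ^ d * (3 * A ^ d) := by gcongr
    _ = 3 * 2 ^ d := by rw [mul_left_comm, ← mul_pow, div_mul_cancel₀ _ hA0.ne']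

lemma tsum_ofReal_level_le {d : ℕ} (hd : d ≠ 0) (l : ℕ) :
    ∑' j, ENNReal.ofReal (((1 / 16) ^ l * (9 * 2 ^ j * f (level A j l))) ^ d) ≤
      ENNReal.ofReal (3 * 9 ^ d * (1 / 8) ^ l) := by
  refine tsum_ofReal_le_of_sum_range_le (fun j => pow_nonneg (mul_nonneg (by positivity)
    (mul_nonneg (by positivity) (hf0 _))) d) fun n => ?_
  have h := sum_range_mul_two_pow_mul_pow_le hf hA hf0 (c := A / 2 ^ l) (by positivity) hd n
  have h16 : 9 * 2 ^ l / (16 ^ l * A) = 9 * (1 / 8 : ℝ) ^ l / A := by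
    rw [show (16 : ℝ) ^ l = 2 ^ l * 8 ^ l by rw [← mul_pow]; norm_num, one_div_pow]
    field_simp
  calc ∑ j ∈ range n, ((1 / 16) ^ l * (9 * 2 ^ j * f (level A j l))) ^ d
      = (9 * 2 ^ l / (16 ^ l * A)) ^ d *
          ∑ j ∈ range n, (A / 2 ^ l * 2 ^ j * f (A / 2 ^ l * 2 ^ j)) ^ d := by
        rw [mul_sum]
        refine sum_congr rfl fun j _ => ?_
        rw [← mul_pow, level, div_mul_eq_mul_div, one_div_pow]
        field_simp
    _ ≤ (9 * 2 ^ l / (16 ^ l * A)) ^ d * (3 * A ^ d) := by gcongr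
    _ = 3 * 9 ^ d * ((1 / 8) ^ l) ^ d := by
        rw [h16, div_pow, mul_pow, one_div_pow]
        field_simp
    _ ≤ 3 * 9 ^ d * (1 / 8) ^ l := by
        gcongr
        exact pow_le_of_le_one (by positivity) (pow_le_one₀ (by norm_num) (by norm_num)) hd

end Levels

section Probability

variable {Ω : Type*} [MeasurableSpace Ω] {P : Measure Ω} {d : ℕ} {X : (Fin d → ℕ) → Ω → ℝ}
  {f : ℝ → ℝ} {A : ℝ} (hX : iIndepFun X P)
  (hq : ∀ v t, P {ω | t < X v ω} = ENNReal.ofReal (f t ^ d)) (hf0 : ∀ x, 0 ≤ f x)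
include hX hq hf0

lemma measure_hasChainAbove_one_le (j : ℕ) (t : ℝ) :
    P {ω | HasChainAbove (2 ^ j) 1 t (X · ω)} ≤ ENNReal.ofReal ((2 * 2 ^ j * f t) ^ d) := by
  refine (measure_hasChainAbove_le hX (hq · t) _ _).trans ?_
  rw [Nat.choose_one_right, pow_one, ← ENNReal.ofReal_natCast, ← ENNReal.ofReal_pow (by positivity),
    ← ENNReal.ofReal_mul (by positivity)]
  refine ENNReal.ofReal_le_ofReal ?_
  rw [mul_pow (2 * 2 ^ j)]
  refine mul_le_mul_of_nonneg_right (pow_le_pow_left₀ (by positivity) ?_ d) (pow_nonneg (hf0 t) d)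
  push_cast
  linarith [one_le_pow₀ (M₀ := ℝ) one_le_two (n := j)]

variable (hf : Antitone f) (hA : ∀ a b, 0 ≤ a → a ≤ b → ∫ x in a..b, f x ≤ A) (hA0 : 0 < A)
include hf hA hA0

lemma measure_hasChainAbove_level_le {j l : ℕ} (hl : l ∈ Icc 1 (j - 5)) :
    P {ω | HasChainAbove (2 ^ j) (chainLength f A j l) (level A j l) (X · ω)} ≤
      ENNReal.ofReal (((1 / 16) ^ l * (9 * 2 ^ j * f (level A j l))) ^ d) := by
  set k := chainLength f A j l
  have hkc : 32 * ((2 ^ j : ℕ) : ℝ) * f (level A j l) ≤ k := by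
    have := Nat.le_ceil (32 * 2 ^ j * f (level A j l))
    simp only [k, chainLength]
    push_cast at this ⊢
    linarith
  have hchoose := choose_add_mul_pow_le (l := l) (hf0 _) (apply_level_le hf hA hA0 hl) hkc
    (by simp only [k, chainLength]; omega) (chainLength_le hf hA hA0 hl)
  push_cast at hchoose
  refine (measure_hasChainAbove_le hX (hq · (level A j l)) _ _).trans ?_
  rw [← ENNReal.ofReal_natCast, ← ENNReal.ofReal_pow (by positivity),
    ← ENNReal.ofReal_pow (pow_nonneg (hf0 _) d), ← ENNReal.ofReal_mul (by positivity)]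
  refine ENNReal.ofReal_le_ofReal ?_
  calc (((2 ^ j + k).choose k : ℕ) : ℝ) ^ d * (f (level A j l) ^ d) ^ k
      = (((2 ^ j + k).choose k : ℕ) * f (level A j l) ^ k) ^ d := by ring
    _ ≤ _ := pow_le_pow_left₀ (mul_nonneg (Nat.cast_nonneg _) (pow_nonneg (hf0 _) k))
        hchoose d

lemma measure_badAt_le (j : ℕ) :
    P {ω | BadAt f A j (X · ω)} ≤ ENNReal.ofReal ((2 * 2 ^ j * f (A * 2 ^ j)) ^ d) +
      ∑' l, ENNReal.ofReal (((1 / 16) ^ l * (9 * 2 ^ j * f (level A j l))) ^ d) := by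
  calc P {ω | BadAt f A j (X · ω)}
      ≤ P {ω | HasChainAbove (2 ^ j) 1 (A * 2 ^ j) (X · ω)} + P (⋃ l ∈ Icc 1 (j - 5),
          {ω | HasChainAbove (2 ^ j) (chainLength f A j l) (level A j l) (X · ω)}) := by
        refine (measure_mono fun ω hω => ?_).trans (measure_union_le _ _)
        rcases hω with h | ⟨l, hl, h⟩
        · exact Or.inl h
        · exact Or.inr (Set.mem_biUnion hl h)
    _ ≤ ENNReal.ofReal ((2 * 2 ^ j * f (A * 2 ^ j)) ^ d) +
          ∑ l ∈ Icc 1 (j - 5), ENNReal.ofReal (((1 / 16) ^ l * (9 * 2 ^ j * f (level A j l))) ^ d) :=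
        add_le_add (measure_hasChainAbove_one_le hX hq hf0 j _)
          ((measure_biUnion_finset_le _ _).trans (sum_le_sum fun l hl =>
            measure_hasChainAbove_level_le hX hq hf0 hf hA hA0 hl))
    _ ≤ _ := by gcongr; exact ENNReal.sum_le_tsum _

lemma tsum_measure_badAt_ne_top (hd : d ≠ 0) : ∑' j, P {ω | BadAt f A j (X · ω)} ≠ ∞ := by
  have hgeom : ∑' l, ENNReal.ofReal (3 * 9 ^ d * (1 / 8 : ℝ) ^ l) ≤
      ENNReal.ofReal (3 * 9 ^ d * (1 / (1 - 1 / 8))) :=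
    tsum_ofReal_le_of_sum_range_le (fun l => by positivity) fun n => by
      rw [← mul_sum]
      gcongr
      simpa using geom_sum_Ico_le_of_lt_one (m := 0) (n := n) (x := (1 / 8 : ℝ)) (by norm_num)
        (by norm_num)
  refine ne_top_of_le_ne_top (ENNReal.add_ne_top.mpr ⟨ENNReal.ofReal_ne_top,
    ENNReal.ofReal_ne_top⟩) (calc
      ∑' j, P {ω | BadAt f A j (X · ω)}
        ≤ ∑' j, (ENNReal.ofReal ((2 * 2 ^ j * f (A * 2 ^ j)) ^ d) +
            ∑' l, ENNReal.ofReal (((1 / 16) ^ l * (9 * 2 ^ j * f (level A j l))) ^ d)) :=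
          ENNReal.tsum_le_tsum (measure_badAt_le hX hq hf0 hf hA hA0)
      _ = ∑' j, ENNReal.ofReal ((2 * 2 ^ j * f (A * 2 ^ j)) ^ d) +
            ∑' l, ∑' j, ENNReal.ofReal (((1 / 16) ^ l * (9 * 2 ^ j * f (level A j l))) ^ d) := by
          rw [ENNReal.tsum_add, ENNReal.tsum_comm]
      _ ≤ _ := add_le_add (tsum_ofReal_cap_le hf hA hA0 hf0 hd)
          ((ENNReal.tsum_le_tsum (tsum_ofReal_level_le hf hA hA0 hf0 hd)).trans hgeom))

end Probability

section LastPassage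

variable {Ω : Type} {d : ℕ} {X : (Fin d → ℕ) → Ω → ℝ}

lemma lastPassage_le {z : Fin d → ℕ} {ω : Ω} {B : ℝ} (hB : 0 ≤ B)
    (h : ∀ p, IsDirPath z p → ∑ k ∈ range (∑ i, z i), X (p k) ω ≤ B) :
    lastPassage X z ω ≤ B :=
  Real.sSup_le (fun _ ⟨p, hp, hs⟩ => hs ▸ h p hp) hB

lemma lastPassage_zero (ω : Ω) : lastPassage X 0 ω = 0 := by
  have hset : {s | ∃ p, IsDirPath (0 : Fin d → ℕ) p ∧
      s = ∑ k ∈ range (∑ i, (0 : Fin d → ℕ) i), X (p k) ω} = {0} := by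
    ext s
    simp only [Pi.zero_apply, sum_const_zero, range_zero, sum_empty, Set.mem_ofPred_eq,
      Set.mem_singleton_iff]
    exact ⟨fun ⟨_, _, hs⟩ => hs, fun hs => ⟨0, ⟨rfl, rfl, by simp⟩, hs⟩⟩
  rw [lastPassage, hset, csSup_singleton]

def maxLastPassage (X : (Fin d → ℕ) → Ω → ℝ) (n : ℕ) (ω : Ω) : ℝ :=
  sSup {t : ℝ | ∃ z : Fin d → ℕ, (∑ i, z i) ≤ n ∧ t = lastPassage X z ω}

lemma maxLastPassage_mem_Icc {n : ℕ} {ω : Ω} {B : ℝ} (hB : 0 ≤ B)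
    (h : ∀ z : Fin d → ℕ, ∑ i, z i ≤ n → lastPassage X z ω ≤ B) :
    maxLastPassage X n ω ∈ Set.Icc 0 B := by
  have hbdd : BddAbove {t : ℝ | ∃ z : Fin d → ℕ, (∑ i, z i) ≤ n ∧ t = lastPassage X z ω} :=
    ⟨B, fun _ ⟨z, hz, ht⟩ => ht ▸ h z hz⟩
  exact ⟨le_csSup hbdd ⟨0, by simp, (lastPassage_zero ω).symm⟩,
    Real.sSup_le (fun _ ⟨z, hz, ht⟩ => ht ▸ h z hz) hB⟩

variable {f : ℝ → ℝ} {A : ℝ} (hf : Antitone f) (hf0 : ∀ x, 0 ≤ f x)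
  (hA : ∀ a b, 0 ≤ a → a ≤ b → ∫ x in a..b, f x ≤ A)
include hf hf0 hA

lemma inv_mul_maxLastPassage_mem_Icc {ω : Ω} {J n : ℕ} (hJ : 5 ≤ J)
    (hgood : ∀ j ≥ J, ¬ BadAt f A j (X · ω)) (hn : 2 ^ J ≤ n) :
    (n : ℝ)⁻¹ * maxLastPassage X n ω ∈ Set.Icc 0 (404 * A) := by
  have hA0 : 0 ≤ A := by simpa using hA 0 0 le_rfl le_rfl
  have hn0 : n ≠ 0 := (Nat.two_pow_pos J).trans_le hn |>.ne'
  set j := Nat.log 2 n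
  have hjn : 2 ^ j ≤ n := Nat.pow_log_le_self 2 hn0
  have hnj : n < 2 ^ (j + 1) := Nat.lt_pow_succ_log_self one_lt_two n
  have hJj : J ≤ j := Nat.le_log_of_pow_le one_lt_two hn
  have h2n : (2 : ℝ) ^ (j + 1) ≤ 2 * n := by
    rw [pow_succ, mul_comm]
    exact_mod_cast Nat.mul_le_mul_left 2 hjn
  have hmem := maxLastPassage_mem_Icc (X := X) (n := n) (ω := ω) (B := 404 * A * n)
    (by positivity) fun z hz => by
      refine (lastPassage_le (by positivity) fun p hp =>
        sum_le_of_not_badAt hf0 hf hA (by omega) (hgood (j + 1) (by omega)) hp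
          (by omega)).trans ?_
      nlinarith
  have hnR : (0 : ℝ) < n := by exact_mod_cast Nat.pos_of_ne_zero hn0
  refine ⟨mul_nonneg (by positivity) hmem.1, ?_⟩
  rw [inv_mul_le_iff₀ hnR]
  linarith [hmem.2]

end LastPassage

lemma ae_eventually_inv_mul_maxLastPassage_mem_Icc {Ω : Type} [MeasurableSpace Ω] {P : Measure Ω}
    [IsProbabilityMeasure P] {d : ℕ} {X : (Fin d → ℕ) → Ω → ℝ} {F : ℝ → ℝ} (hX : IID X P F)
    (hd : d ≠ 0) (hint : IntegrableOn (fun s => (1 - F s) ^ ((1 : ℝ) / d)) (Set.Ici 0) volume)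
    {A : ℝ} (hA : ∫ s in Set.Ici (0 : ℝ), (1 - F s) ^ ((1 : ℝ) / d) < A) :
    ∀ᵐ ω ∂P, ∀ᶠ n : ℕ in atTop, (n : ℝ)⁻¹ * maxLastPassage X n ω ∈ Set.Icc 0 (404 * A) := by
  obtain ⟨hmeas, hind, hF⟩ := hX
  have hf := rootTail_antitone (hF 0) d
  have hf0 := rootTail_nonneg (hF 0) d
  have hfA (a b : ℝ) (ha : 0 ≤ a) (hab : a ≤ b) : ∫ x in a..b, rootTail F d x ≤ A :=
    (intervalIntegral_rootTail_le (hF 0) hint ha hab).trans hA.le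
  have hA0 : 0 < A := lt_of_le_of_lt (setIntegral_nonneg measurableSet_Ici fun x _ =>
    Real.rpow_nonneg (sub_nonneg.mpr (le_one_of_measure_le_eq (hF 0) x)) _) hA
  have hq (v : Fin d → ℕ) (t : ℝ) :
      P {ω | t < X v ω} = ENNReal.ofReal (rootTail F d t ^ d) := by
    rw [rootTail_pow (hF v) hd, measure_lt_eq_ofReal_tail (hF v) (hmeas v)]
  filter_upwards [ae_eventually_notMem (tsum_measure_badAt_ne_top hind hq hf0 hf hfA hA0 hd)]
    with ω hω
  obtain ⟨J, hJ⟩ := eventually_atTop.mp hω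
  filter_upwards [eventually_ge_atTop (2 ^ max J 5)] with n hn
  exact inv_mul_maxLastPassage_mem_Icc hf hf0 hfA (le_max_right J 5)
    (fun j hj => hJ j (le_of_max_le_left hj)) hn

end DirectedPercolation

open DirectedPercolation

/-- Lemma 3.5(ii): there is `c = c(d) < ∞` such that for every weight distribution `F`
with `∫₀^∞ (1 - F(s))^{1/d} ds < ∞`, almost surely
`limsup_n n⁻¹ max_{‖z‖ ≤ n} T(z) ≤ c ∫₀^∞ (1 - F(s))^{1/d} ds`. -/
theorem directed_percolation_limsup_bound (d : ℕ) (hd : 2 ≤ d) :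
    ∃ c : ℝ, ∀ (Ω : Type) [MeasurableSpace Ω] (P : Measure Ω) [IsProbabilityMeasure P]
      (X : (Fin d → ℕ) → Ω → ℝ) (F : ℝ → ℝ), IID X P F →
      IntegrableOn (fun s => (1 - F s) ^ ((1 : ℝ) / d)) (Set.Ici 0) volume →
      ∀ᵐ ω ∂P,
        Filter.limsup
          (fun n : ℕ => (n : ℝ)⁻¹ *
            sSup {t : ℝ | ∃ z : Fin d → ℕ, (∑ i, z i) ≤ n ∧ t = lastPassage X z ω}) atTop
          ≤ c * ∫ s in Set.Ici (0 : ℝ), (1 - F s) ^ ((1 : ℝ) / d) := by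
  refine ⟨404, fun Ω _ P _ X F hX hint => ?_⟩
  set I := ∫ s in Set.Ici (0 : ℝ), (1 - F s) ^ ((1 : ℝ) / d)
  have hbound (k : ℕ) := ae_eventually_inv_mul_maxLastPassage_mem_Icc hX (by omega) hint
    (lt_add_of_pos_right I (Nat.one_div_pos_of_nat (n := k)))
  filter_upwards [ae_all_iff.mpr hbound] with ω hω
  have hcob : IsCoboundedUnder (· ≤ ·) atTop fun n : ℕ => (n : ℝ)⁻¹ * maxLastPassage X n ω :=
    isCoboundedUnder_le_of_eventually_le atTop ((hω 0).mono fun _ hn => hn.1)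
  have hlim : Tendsto (fun k : ℕ => 404 * (I + 1 / ((k : ℝ) + 1))) atTop (𝓝 (404 * I)) := by
    simpa using (tendsto_one_div_add_atTop_nhds_zero_nat.const_add I).const_mul 404
  exact ge_of_tendsto' hlim fun k => limsup_le_of_le hcob ((hω k).mono fun _ hn => hn.2)

end
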